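/- arXiv:2405.12660 — 2 statements merged into one kernel-verified Lean document; each statement's English description precedes it below -/
import Mathlib

section
/- Let U be a finite set and let 𝒯 be a family of subsets of U such that: ∅ ∈ 𝒯; 𝒯 is closed under pairwise intersections; for all distinct x, y ∈ U there exists K ∈ 𝒯 with |{x, y} ∩ K| = 1; for all K₁, K₂, K₃, M₁, M₂, M₃ ∈ 𝒯 with K_i ∪ K_j ⊆ M_k for every permutation {i, j, k} = {1, 2, 3}, one has K₁ ∪ K₂ ∪ K₃ ∈ 𝒯 (i.e., 𝒯 is a median set system); and the 1-inclusion graph of 𝒯 (the graph with vertex set 𝒯 in which S and T are adjacent if and only if |S △ T| = 1) is a tree, i.e., connected and acyclic. Then 𝒯 is realizable in ℝ². -/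
/-!
Median closure makes `Z ↦ med(X, Z, Y)` a retraction of the 1-inclusion graph onto the members
between `X ∩ Y` and `X ∪ Y` which moves adjacent members to adjacent or equal ones. Hence, for
every element `e`, the members containing `e` and those avoiding it both induce connected
subgraphs. In a tree each edge is a bridge, so two such halfspaces cannot cross (with `∅` lying
outside both): the halfspaces form a laminar family.

Listing the members so that every halfspace occupies an interval of positions `[lo e, hi e]`, put
the member at position `k` at `(k, k² + 1/8)`, just above the parabola `y = x²`, and cut off the
halfspace of `e` by the chord of the parabola over `[lo e - 1/2, hi e + 1/2]`. Above the parabola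
the caps of these chords are nested or disjoint, so the pattern of any point is the set of `e`
whose interval contains the innermost one, i.e. the intersection of the two members at the ends of
that innermost interval.
-/

open Finset

/-- Realizability of a set family in `ℝ^d` by an arrangement of affine hyperplanes
restricted to an open convex set. -/
def IsRealizable {α : Type*} [Fintype α] (𝒮 : Set (Finset α)) (d : ℕ) : Prop :=
  ∃ (a : α → Fin d → ℝ) (b : α → ℝ) (K : Set (Fin d → ℝ)),
    IsOpen K ∧ Convex ℝ K ∧
      ∀ X : Finset α, X ∈ 𝒮 ↔ ∃ x ∈ K,
        (∀ e ∈ X, 0 < (∑ i, a e i * x i) + b e) ∧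
        ∀ e ∉ X, (∑ i, a e i * x i) + b e < 0

def IsLaminar {V : Type*} (F : Set (Set V)) : Prop :=
  ∀ A ∈ F, ∀ B ∈ F, A ⊆ B ∨ B ⊆ A ∨ Disjoint A B

def halfspaces {α : Type*} (𝒮 : Set (Finset α)) : Set (Set 𝒮) :=
  Set.range fun e => {U : 𝒮 | e ∈ U.1}

theorem IsLaminar.exists_ordering {V : Type*} [Finite V] {F : Set (Set V)} (hF : IsLaminar F) :
    ∃ p : V → ℕ, ∀ A ∈ F, ∀ u ∈ A, ∀ w ∈ A, ∀ v, p u ≤ p v → p v ≤ p w → v ∈ A := by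
  classical
  induction F using WellFoundedLT.induction with
  | _ F ih =>
  obtain rfl | hne := F.eq_empty_or_nonempty
  · exact ⟨0, by simp⟩
  obtain ⟨M, hM⟩ := F.toFinite.exists_maximal hne
  have hlt (P : Set V → Prop) : {A ∈ F | A ≠ M ∧ P A} < F :=
    (Set.ssubset_iff_of_subset (Set.sep_subset _ _)).2 ⟨M, hM.1, fun h => h.2.1 rfl⟩
  have hsub (P : Set V → Prop) : IsLaminar {A ∈ F | A ≠ M ∧ P A} :=
    fun A hA B hB => hF A hA.1 B hB.1
  obtain ⟨p₁, hp₁⟩ := ih _ (hlt (· ⊆ M)) (hsub _)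
  obtain ⟨p₂, hp₂⟩ := ih _ (hlt (Disjoint · M)) (hsub _)
  obtain ⟨N, hN⟩ := (Set.finite_range p₁).bddAbove
  set p : V → ℕ := fun v => if v ∈ M then p₁ v else N + 1 + p₂ v
  have hpM : ∀ v, v ∈ M ↔ p v ≤ N := fun v => by
    by_cases hv : v ∈ M
    · simpa [p, hv] using hN ⟨v, rfl⟩
    · simp only [p, hv, if_false, false_iff]
      omega
  refine ⟨p, fun A hA u hu w hw v huv hvw => ?_⟩
  by_cases hAM : A = M
  · subst hAM
    exact (hpM v).2 (hvw.trans ((hpM w).1 hw))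
  rcases hF A hA M hM.1 with hAM' | hMA | hdisj
  · have hvM := (hpM v).2 (hvw.trans ((hpM w).1 (hAM' hw)))
    simp only [p, hAM' hu, hAM' hw, hvM, if_true] at huv hvw
    exact hp₁ A ⟨hA, hAM, hAM'⟩ u hu w hw v huv hvw
  · exact absurd (hM.eq_of_subset hA hMA).symm hAM
  · have huM : u ∉ M := Set.disjoint_left.1 hdisj hu
    have hwM : w ∉ M := Set.disjoint_left.1 hdisj hw
    have hvM : v ∉ M := fun hv => by
      have := (hpM v).1 hv
      have := (not_congr (hpM u)).1 huM
      omega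
    simp only [p, huM, hwM, hvM, if_false] at huv hvw
    exact hp₂ A ⟨hA, hAM, hdisj⟩ u hu w hw v (by omega) (by omega)

theorem exists_bounds_of_ordConnected {V : Type*} [Finite V] (p : V → ℕ) {A : Set V}
    (hA : ∀ u ∈ A, ∀ w ∈ A, ∀ v, p u ≤ p v → p v ≤ p w → v ∈ A) :
    ∃ lo hi : ℕ, lo ≤ hi + 1 ∧ (∀ v, v ∈ A ↔ lo ≤ p v ∧ p v ≤ hi) ∧
      (lo ≤ hi → (∃ v, p v = lo) ∧ ∃ v, p v = hi) := by
  obtain rfl | hne := A.eq_empty_or_nonempty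
  · exact ⟨1, 0, le_rfl, fun v => by simp only [Set.mem_empty_iff_false, false_iff]; omega, by simp⟩
  obtain ⟨u, hu, hmin⟩ := A.exists_min_image p A.toFinite hne
  obtain ⟨w, hw, hmax⟩ := A.exists_max_image p A.toFinite hne
  exact ⟨p u, p w, (hmax u hu).trans (Nat.le_succ _),
    fun v => ⟨fun hv => ⟨hmin v hv, hmax v hv⟩, fun h => hA u hu w hw v h.1 h.2⟩,
    fun _ => ⟨⟨u, rfl⟩, w, rfl⟩⟩

lemma convex_setOf_sq_lt : Convex ℝ {x : Fin 2 → ℝ | x 0 ^ 2 < x 1} := by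
  have h₁ : ConvexOn ℝ Set.univ fun x : Fin 2 → ℝ => x 0 ^ 2 :=
    (even_two.convexOn_pow (𝕜 := ℝ)).comp_linearMap (LinearMap.proj (R := ℝ) (φ := fun _ => ℝ) 0)
  have h₂ : ConcaveOn ℝ Set.univ fun x : Fin 2 → ℝ => x 1 :=
    (LinearMap.proj (R := ℝ) (φ := fun _ : Fin 2 => ℝ) 1).concaveOn convex_univ
  simpa only [Set.mem_univ, true_and, Pi.sub_apply, sub_neg] using (h₁.sub h₂).convex_lt 0

structure IntervalModel {α : Type*} (𝒮 : Set (Finset α)) where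
  pos : 𝒮 → ℕ
  lo : α → ℕ
  hi : α → ℕ
  mem_iff : ∀ e (U : 𝒮), e ∈ U.1 ↔ lo e ≤ pos U ∧ pos U ≤ hi e
  -- an empty interval is normalised to `lo e = hi e + 1`, so that its chord degenerates
  lo_le_hi_add_one : ∀ e, lo e ≤ hi e + 1
  exists_pos_eq_lo : ∀ e, lo e ≤ hi e → ∃ U, pos U = lo e
  exists_pos_eq_hi : ∀ e, lo e ≤ hi e → ∃ U, pos U = hi e

namespace IntervalModel

variable {α : Type*} {𝒮 : Set (Finset α)} (M : IntervalModel 𝒮)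

/-- Height above the parabola `y = x²` of its chord over `[lo e - 1/2, hi e + 1/2]`, at `x = t`. -/
noncomputable def height (e : α) (t : ℝ) : ℝ := (t - (M.lo e - 1 / 2)) * (M.hi e + 1 / 2 - t)

lemma quarter_le_height {e : α} {U : 𝒮} (h : e ∈ U.1) : 1 / 4 ≤ M.height e (M.pos U) := by
  obtain ⟨h₁, h₂⟩ := (M.mem_iff e U).1 h
  have h₁' : (M.lo e : ℝ) ≤ M.pos U := by exact_mod_cast h₁
  have h₂' : (M.pos U : ℝ) ≤ M.hi e := by exact_mod_cast h₂
  unfold height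
  nlinarith

lemma height_le_neg_quarter {e : α} {U : 𝒮} (h : e ∉ U.1) : M.height e (M.pos U) ≤ -1 / 4 := by
  rw [M.mem_iff] at h
  have hle := M.lo_le_hi_add_one e
  unfold height
  rcases Nat.lt_or_ge (M.pos U) (M.lo e) with h₁ | h₁
  · have h₁' : (M.pos U : ℝ) + 1 ≤ M.lo e := by exact_mod_cast h₁
    have h₂' : (M.pos U : ℝ) ≤ M.hi e := by exact_mod_cast (show M.pos U ≤ M.hi e by omega)
    nlinarith
  · have h₂' : (M.hi e : ℝ) + 1 ≤ M.pos U := by exact_mod_cast (show M.hi e + 1 ≤ M.pos U by omega)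
    have h₁' : (M.lo e : ℝ) ≤ M.pos U := by exact_mod_cast h₁
    nlinarith

lemma lt_and_lt_of_height_pos {e : α} {t : ℝ} (h : 0 < M.height e t) :
    M.lo e - 1 / 2 < t ∧ t < M.hi e + 1 / 2 := by
  have hle : (M.lo e : ℝ) ≤ M.hi e + 1 := by exact_mod_cast M.lo_le_hi_add_one e
  unfold height at h
  constructor <;> by_contra! h' <;> nlinarith

lemma lo_le_hi_of_height_pos {e f : α} {t : ℝ} (he : 0 < M.height e t) (hf : 0 < M.height f t) :
    M.lo e ≤ M.hi f := by
  have : (M.lo e : ℝ) < M.hi f + 1 := by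
    linarith [(M.lt_and_lt_of_height_pos he).1, (M.lt_and_lt_of_height_pos hf).2]
  exact Nat.lt_add_one_iff.1 (by exact_mod_cast this)

lemma height_le_height {e f : α} {t : ℝ} (hlo : M.lo e ≤ M.lo f) (hhi : M.hi f ≤ M.hi e)
    (ht : 0 < M.height f t) : M.height f t ≤ M.height e t := by
  obtain ⟨h₁, h₂⟩ := M.lt_and_lt_of_height_pos ht
  have hlo' : (M.lo e : ℝ) ≤ M.lo f := by exact_mod_cast hlo
  have hhi' : (M.hi f : ℝ) ≤ M.hi e := by exact_mod_cast hhi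
  unfold height
  apply mul_le_mul <;> linarith

lemma le_lo_and_hi_le (hlam : IsLaminar (halfspaces 𝒮)) {e f : α} (he : M.lo e ≤ M.hi e)
    (hf : M.lo f ≤ M.hi f) (hef : M.lo e ≤ M.hi f) (hfe : M.lo f ≤ M.hi e)
    (hw : M.hi f - M.lo f ≤ M.hi e - M.lo e) : M.lo e ≤ M.lo f ∧ M.hi f ≤ M.hi e := by
  obtain ⟨Ue, hUe⟩ := M.exists_pos_eq_lo e he
  obtain ⟨We, hWe⟩ := M.exists_pos_eq_hi e he
  obtain ⟨Uf, hUf⟩ := M.exists_pos_eq_lo f hf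
  obtain ⟨Wf, hWf⟩ := M.exists_pos_eq_hi f hf
  rcases hlam _ ⟨e, rfl⟩ _ ⟨f, rfl⟩ with hsub | hsub | hdisj
  · have h₁ := (M.mem_iff f Ue).1 (hsub ((M.mem_iff e Ue).2 (by omega)))
    have h₂ := (M.mem_iff f We).1 (hsub ((M.mem_iff e We).2 (by omega)))
    omega
  · have h₁ := (M.mem_iff e Uf).1 (hsub ((M.mem_iff f Uf).2 (by omega)))
    have h₂ := (M.mem_iff e Wf).1 (hsub ((M.mem_iff f Wf).2 (by omega)))
    omega
  · exfalso
    rcases le_total (M.lo e) (M.lo f) with h | h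
    · exact Set.disjoint_left.1 hdisj ((M.mem_iff e Uf).2 (by omega))
        ((M.mem_iff f Uf).2 (by omega))
    · exact Set.disjoint_left.1 hdisj ((M.mem_iff e Ue).2 (by omega))
        ((M.mem_iff f Ue).2 (by omega))

lemma mem_of_forall_mem_iff_lt_height [DecidableEq α] (h0 : ∅ ∈ 𝒮)
    (hinter : ∀ X ∈ 𝒮, ∀ Y ∈ 𝒮, X ∩ Y ∈ 𝒮) (hlam : IsLaminar (halfspaces 𝒮)) {X : Finset α}
    {s t : ℝ} (hs : 0 < s) (hX : ∀ e, e ∈ X ↔ s < M.height e t) : X ∈ 𝒮 := by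
  obtain rfl | hne := X.eq_empty_or_nonempty
  · exact h0
  have hpos : ∀ e ∈ X, 0 < M.height e t := fun e he => hs.trans ((hX e).1 he)
  obtain ⟨e₀, he₀, hmin⟩ := X.exists_min_image (fun e => M.hi e - M.lo e) hne
  have hne₀ := M.lo_le_hi_of_height_pos (hpos e₀ he₀) (hpos e₀ he₀)
  obtain ⟨U, hU⟩ := M.exists_pos_eq_lo e₀ hne₀
  obtain ⟨W, hW⟩ := M.exists_pos_eq_hi e₀ hne₀
  -- `X` consists of the `e` whose interval contains that of `e₀`
  suffices X = U.1 ∩ W.1 from this ▸ hinter _ U.2 _ W.2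
  ext e
  rw [mem_inter, M.mem_iff e U, M.mem_iff e W, hU, hW]
  constructor
  · intro he
    have := M.le_lo_and_hi_le hlam (M.lo_le_hi_of_height_pos (hpos e he) (hpos e he)) hne₀
      (M.lo_le_hi_of_height_pos (hpos e he) (hpos e₀ he₀))
      (M.lo_le_hi_of_height_pos (hpos e₀ he₀) (hpos e he)) (hmin e he)
    omega
  · rintro ⟨⟨hlo, -⟩, -, hhi⟩
    exact (hX e).2 (((hX e₀).1 he₀).trans_le (M.height_le_height hlo hhi (hpos e₀ he₀)))

end IntervalModel

theorem IntervalModel.isRealizable {α : Type*} [Fintype α] [DecidableEq α] {𝒮 : Set (Finset α)}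
    (M : IntervalModel 𝒮) (h0 : ∅ ∈ 𝒮)
    (hinter : ∀ X ∈ 𝒮, ∀ Y ∈ 𝒮, X ∩ Y ∈ 𝒮) (hlam : IsLaminar (halfspaces 𝒮)) :
    IsRealizable 𝒮 2 := by
  refine ⟨fun e => ![M.lo e + M.hi e, -1], fun e => -((M.lo e - 1 / 2) * (M.hi e + 1 / 2)),
    {x | x 0 ^ 2 < x 1}, isOpen_lt (by fun_prop) (by fun_prop), convex_setOf_sq_lt, fun X => ?_⟩
  have heval (e : α) (x : Fin 2 → ℝ) : ∑ i, ![(M.lo e + M.hi e : ℝ), -1] i * x i +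
      -((M.lo e - 1 / 2) * (M.hi e + 1 / 2)) = M.height e (x 0) - (x 1 - x 0 ^ 2) := by
    simp only [Fin.sum_univ_two, Matrix.cons_val_zero, Matrix.cons_val_one,
      Matrix.cons_val_fin_one, height]
    ring
  simp only [heval, sub_pos, sub_neg]
  constructor
  · intro hX
    set U : 𝒮 := ⟨X, hX⟩
    refine ⟨![M.pos U, M.pos U ^ 2 + 1 / 8], by simp, fun e he => ?_, fun e he => ?_⟩ <;>
      simp only [Matrix.cons_val_zero, Matrix.cons_val_one, Matrix.cons_val_fin_one,
        add_sub_cancel_left]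
    · linarith [M.quarter_le_height (U := U) he]
    · linarith [M.height_le_neg_quarter (U := U) he]
  · rintro ⟨x, hx, hpos, hneg⟩
    exact M.mem_of_forall_mem_iff_lt_height h0 hinter hlam (sub_pos.2 hx)
      fun e => ⟨hpos e, fun h => by_contra fun he => (hneg e he).not_gt h⟩

theorem IsLaminar.nonempty_intervalModel {α : Type*} [Finite α] {𝒮 : Set (Finset α)}
    (hlam : IsLaminar (halfspaces 𝒮)) : Nonempty (IntervalModel 𝒮) := by
  obtain ⟨p, hp⟩ := hlam.exists_ordering
  choose lo hi hle hmem htight using fun e => exists_bounds_of_ordConnected p (hp _ ⟨e, rfl⟩)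
  exact ⟨⟨p, lo, hi, hmem, hle, fun e h => (htight e h).1, fun e h => (htight e h).2⟩⟩

namespace SimpleGraph

variable {V : Type*} {G : SimpleGraph V}

lemma Reachable.exists_walk_of_induce {S : Set V} {x y : S} (h : (G.induce S).Reachable x y) :
    ∃ w : G.Walk x y, ∀ z ∈ w.support, z ∈ S := by
  obtain ⟨w⟩ := h
  refine ⟨w.map (Embedding.induce S).toHom, fun z hz => ?_⟩
  obtain ⟨z', -, rfl⟩ := List.mem_map.1 (Walk.support_map _ _ ▸ hz)
  exact z'.2

lemma IsAcyclic.eq_of_adj_of_mem_of_notMem (hG : G.IsAcyclic) {S : Set V}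
    (hS : (G.induce S).Preconnected) (hSc : (G.induce Sᶜ).Preconnected) {u₁ v₁ u₂ v₂ : V}
    (h₁ : G.Adj u₁ v₁) (h₂ : G.Adj u₂ v₂) (hu₁ : u₁ ∈ S) (hv₁ : v₁ ∉ S) (hu₂ : u₂ ∈ S)
    (hv₂ : v₂ ∉ S) : u₁ = u₂ := by
  obtain ⟨w₁, hw₁⟩ := (hS ⟨u₁, hu₁⟩ ⟨u₂, hu₂⟩).exists_walk_of_induce
  obtain ⟨w₂, hw₂⟩ := (hSc ⟨v₂, hv₂⟩ ⟨v₁, hv₁⟩).exists_walk_of_induce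
  -- `u₁v₁` is a bridge, yet `w₁`, `u₂v₂`, `w₂` join its ends.
  have hmem := isBridge_iff_forall_walk_mem_edges.1 (isAcyclic_iff_forall_adj_isBridge.1 hG h₁)
    (w₁.append (.cons h₂ w₂))
  simp only [Walk.edges_append, Walk.edges_cons, List.mem_append, List.mem_cons] at hmem
  rcases hmem with h | h | h
  · exact absurd (hw₁ _ (w₁.snd_mem_support_of_mem_edges h)) hv₁
  · rcases Sym2.eq_iff.1 h with ⟨rfl, -⟩ | ⟨rfl, -⟩
    · rfl
    · exact absurd hu₁ hv₂
  · exact absurd hu₁ (hw₂ _ (w₂.fst_mem_support_of_mem_edges h))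

lemma IsAcyclic.laminar_of_preconnected (hG : G.IsAcyclic) {S T : Set V}
    (hS : (G.induce S).Preconnected) (hSc : (G.induce Sᶜ).Preconnected)
    (hT : (G.induce T).Preconnected) (hTc : (G.induce Tᶜ).Preconnected) {r : V} (hrS : r ∉ S)
    (hrT : r ∉ T) : S ⊆ T ∨ T ⊆ S ∨ Disjoint S T := by
  by_contra! h
  simp only [Set.not_subset, Set.not_disjoint_iff] at h
  obtain ⟨⟨p, hpS, hpT⟩, ⟨q, hqT, hqS⟩, ⟨w, hwS, hwT⟩⟩ := h
  obtain ⟨w₁⟩ := hS ⟨w, hwS⟩ ⟨p, hpS⟩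
  obtain ⟨d₁, -, hd₁T, hd₁T'⟩ := w₁.exists_boundary_dart {z | z.1 ∈ T} hwT hpT
  obtain ⟨w₂⟩ := hSc ⟨q, hqS⟩ ⟨r, hrS⟩
  obtain ⟨d₂, -, hd₂T, hd₂T'⟩ := w₂.exists_boundary_dart {z | z.1 ∈ T} hqT hrT
  have : d₁.fst.1 = d₂.fst.1 :=
    hG.eq_of_adj_of_mem_of_notMem hT hTc d₁.adj d₂.adj hd₁T hd₁T' hd₂T hd₂T'
  exact d₂.fst.2 (this ▸ d₁.fst.2)

end SimpleGraph

section OneInclusionGraph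

variable {α : Type*} [DecidableEq α] {𝒯 : Set (Finset α)}

def oneInclusionGraph (𝒯 : Set (Finset α)) : SimpleGraph 𝒯 :=
  SimpleGraph.fromRel fun S T => #(symmDiff S.1 T.1) = 1

lemma oneInclusionGraph_adj {S T : 𝒯} :
    (oneInclusionGraph 𝒯).Adj S T ↔ #(symmDiff S.1 T.1) = 1 := by
  rw [oneInclusionGraph, SimpleGraph.fromRel_adj, symmDiff_comm T.1, or_self,
    and_iff_right_iff_imp]
  rintro h rfl
  simp at h

def IsMedianClosed (𝒯 : Set (Finset α)) : Prop :=
  ∀ X ∈ 𝒯, ∀ Y ∈ 𝒯, ∀ Z ∈ 𝒯, X ∩ Y ∪ X ∩ Z ∪ Y ∩ Z ∈ 𝒯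

lemma isMedianClosed_of_inter_mem (hinter : ∀ X ∈ 𝒯, ∀ Y ∈ 𝒯, X ∩ Y ∈ 𝒯)
    (hmed : ∀ K₁ ∈ 𝒯, ∀ K₂ ∈ 𝒯, ∀ K₃ ∈ 𝒯, ∀ M₁ ∈ 𝒯, ∀ M₂ ∈ 𝒯, ∀ M₃ ∈ 𝒯,
      K₁ ∪ K₂ ⊆ M₃ → K₁ ∪ K₃ ⊆ M₂ → K₂ ∪ K₃ ⊆ M₁ → K₁ ∪ K₂ ∪ K₃ ∈ 𝒯) :
    IsMedianClosed 𝒯 := fun _ hX _ hY _ hZ =>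
  hmed _ (hinter _ hX _ hY) _ (hinter _ hX _ hZ) _ (hinter _ hY _ hZ) _ hZ _ hY _ hX
    (union_subset inter_subset_left inter_subset_left)
    (union_subset inter_subset_right inter_subset_left)
    (union_subset inter_subset_right inter_subset_right)

lemma reachable_induce_of_interval_subset
    (hmedian : IsMedianClosed 𝒯)
    (hconn : (oneInclusionGraph 𝒯).Connected) {S : Set 𝒯} (X Y : S)
    (hS : ∀ Z : 𝒯, X.1.1 ∩ Y.1.1 ⊆ Z.1 → Z.1 ⊆ X.1.1 ∪ Y.1.1 → Z ∈ S) :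
    ((oneInclusionGraph 𝒯).induce S).Reachable X Y := by
  -- the median with `X` and `Y` retracts the graph onto the interval between them
  let π : 𝒯 → S := fun Z => ⟨⟨X.1.1 ∩ Z.1 ∪ X.1.1 ∩ Y.1.1 ∪ Z.1 ∩ Y.1.1,
    hmedian _ X.1.2 _ Z.2 _ Y.1.2⟩,
    hS _ (by intro; simp_all) (by intro; simp only [mem_union, mem_inter]; tauto)⟩
  have hπX : π X = X := by ext : 2; simp [π]
  have hπY : π Y = Y := by ext : 2; simp [π]
  have hstep {Z Z' : 𝒯} (h : (oneInclusionGraph 𝒯).Adj Z Z') :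
      ((oneInclusionGraph 𝒯).induce S).Reachable (π Z) (π Z') := by
    rw [oneInclusionGraph_adj] at h
    have hsub : symmDiff (π Z).1.1 (π Z').1.1 ⊆ symmDiff Z.1 Z'.1 := by
      intro x
      simp only [π, mem_symmDiff, mem_union, mem_inter]
      tauto
    rcases Nat.le_one_iff_eq_zero_or_eq_one.1 (h ▸ card_le_card hsub) with h0 | h1
    · rw [card_eq_zero, symmDiff_eq_empty, ← Subtype.ext_iff, ← Subtype.ext_iff] at h0
      rw [h0]
    · exact (SimpleGraph.induce_adj.2 (oneInclusionGraph_adj.2 h1)).reachable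
  suffices ∀ {Z Z' : 𝒯}, (oneInclusionGraph 𝒯).Walk Z Z' →
      ((oneInclusionGraph 𝒯).induce S).Reachable (π Z) (π Z') from
    hπX ▸ hπY ▸ this (hconn.preconnected X.1 Y.1).some
  intro Z Z' w
  induction w with
  | nil => rfl
  | cons h _ ih => exact (hstep h).trans ih

lemma preconnected_induce_setOf_mem
    (hmedian : IsMedianClosed 𝒯)
    (hconn : (oneInclusionGraph 𝒯).Connected) (e : α) :
    ((oneInclusionGraph 𝒯).induce {Z : 𝒯 | e ∈ Z.1}).Preconnected := fun X Y =>
  reachable_induce_of_interval_subset hmedian hconn X Y fun _ hZ _ => hZ (mem_inter.2 ⟨X.2, Y.2⟩)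

lemma preconnected_induce_compl_setOf_mem
    (hmedian : IsMedianClosed 𝒯)
    (hconn : (oneInclusionGraph 𝒯).Connected) (e : α) :
    ((oneInclusionGraph 𝒯).induce {Z : 𝒯 | e ∈ Z.1}ᶜ).Preconnected := fun X Y =>
  reachable_induce_of_interval_subset hmedian hconn X Y fun _ _ hZ he =>
    (mem_union.1 (hZ he)).elim X.2 Y.2

lemma isLaminar_halfspaces (hmedian : IsMedianClosed 𝒯)
    (h0 : ∅ ∈ 𝒯) (htree : (oneInclusionGraph 𝒯).IsTree) : IsLaminar (halfspaces 𝒯) := by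
  rintro _ ⟨e, rfl⟩ _ ⟨f, rfl⟩
  have hconn := htree.connected
  exact htree.isAcyclic.laminar_of_preconnected (preconnected_induce_setOf_mem hmedian hconn e)
    (preconnected_induce_compl_setOf_mem hmedian hconn e)
    (preconnected_induce_setOf_mem hmedian hconn f)
    (preconnected_induce_compl_setOf_mem hmedian hconn f) (r := ⟨∅, h0⟩)
    (notMem_empty e) (notMem_empty f)

end OneInclusionGraph

theorem tree_median_set_system_realizable_in_plane_general
    {α : Type*} [Fintype α] [DecidableEq α] (𝒯 : Set (Finset α))
    (h0 : (∅ : Finset α) ∈ 𝒯)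
    (hinter : ∀ X ∈ 𝒯, ∀ Y ∈ 𝒯, X ∩ Y ∈ 𝒯)
    (hmed : ∀ K₁ ∈ 𝒯, ∀ K₂ ∈ 𝒯, ∀ K₃ ∈ 𝒯, ∀ M₁ ∈ 𝒯, ∀ M₂ ∈ 𝒯, ∀ M₃ ∈ 𝒯,
      K₁ ∪ K₂ ⊆ M₃ → K₁ ∪ K₃ ⊆ M₂ → K₂ ∪ K₃ ⊆ M₁ → K₁ ∪ K₂ ∪ K₃ ∈ 𝒯)
    (htree : (SimpleGraph.fromRel
      (fun S T : {X : Finset α // X ∈ 𝒯} => (symmDiff S.val T.val).card = 1)).IsTree) :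
    IsRealizable 𝒯 2 := by
  have hlam : IsLaminar (halfspaces 𝒯) :=
    isLaminar_halfspaces (isMedianClosed_of_inter_mem hinter hmed) h0 htree
  obtain ⟨M⟩ := hlam.nonempty_intervalModel
  exact M.isRealizable h0 hinter hlam

/-- A median set system whose 1-inclusion graph (two members adjacent iff their
symmetric difference is a singleton) is a tree is realizable in `ℝ²`. -/
theorem tree_median_set_system_realizable_in_plane
    {α : Type*} [Fintype α] [DecidableEq α] (𝒯 : Set (Finset α))
    (h0 : (∅ : Finset α) ∈ 𝒯)
    (hinter : ∀ X ∈ 𝒯, ∀ Y ∈ 𝒯, X ∩ Y ∈ 𝒯)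
    (hsep : ∀ x y : α, x ≠ y → ∃ K ∈ 𝒯, (({x, y} : Finset α) ∩ K).card = 1)
    (hmed : ∀ K₁ ∈ 𝒯, ∀ K₂ ∈ 𝒯, ∀ K₃ ∈ 𝒯, ∀ M₁ ∈ 𝒯, ∀ M₂ ∈ 𝒯, ∀ M₃ ∈ 𝒯,
      K₁ ∪ K₂ ⊆ M₃ → K₁ ∪ K₃ ⊆ M₂ → K₂ ∪ K₃ ⊆ M₁ → K₁ ∪ K₂ ∪ K₃ ∈ 𝒯)
    (htree : (SimpleGraph.fromRel
      (fun S T : {X : Finset α // X ∈ 𝒯} => (symmDiff S.val T.val).card = 1)).IsTree) :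
    IsRealizable 𝒯 2 :=
  tree_median_set_system_realizable_in_plane_general 𝒯 h0 hinter hmed htree
end

section
/- Let U be a finite set with |U| = n, let 1 ≤ r ≤ n, and let 𝒮 = {X ⊆ U : |X| ≤ r} be the full simplicial complex U_{r,n} consisting of all subsets of U of size at most r. If 𝒮 is realizable in ℝ^m, then m ≥ min(2r, n − 1). -/
open Finset

lemma exists_nontrivial_relation_of_finrank_lt_card {ι K V : Type*} [DivisionRing K]
    [AddCommGroup V] [Module K V] [FiniteDimensional K V] (v : ι → V) {S : Finset ι}
    (hS : Module.finrank K V < #S) :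
    ∃ c : ι → K, ∑ e ∈ S, c e • v e = 0 ∧ ∃ e ∈ S, c e ≠ 0 := by
  refine not_linearIndepOn_finset_iff.mp fun hv => hS.not_ge ?_
  simpa using hv.fintype_card_le_finrank

lemma sum_mul_pos_of_sign_agree {ι : Type*} {S : Finset ι} {c y : ι → ℝ}
    (hsign : ∀ e ∈ S, c e ≠ 0 → 0 < c e * y e) (hne : ∃ e ∈ S, c e ≠ 0) :
    0 < ∑ e ∈ S, c e * y e := by
  obtain ⟨e₀, he₀, hc₀⟩ := hne
  refine sum_pos' (fun e he => ?_) ⟨e₀, he₀, hsign e₀ he₀ hc₀⟩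
  by_cases hc : c e = 0
  · simp [hc]
  · exact (hsign e he hc).le

lemma sum_mul_affine_eq_zero {ι : Type*} {m : ℕ} {a : ι → Fin m → ℝ} {b : ι → ℝ}
    {S : Finset ι} {c : ι → ℝ}
    (hc : ∑ e ∈ S, c e • (Fin.snoc (a e) (b e) : Fin (m + 1) → ℝ) = 0)
    (x : Fin m → ℝ) :
    ∑ e ∈ S, c e * ((∑ i, a e i * x i) + b e) = 0 := by
  have hlin : ∀ i, ∑ e ∈ S, c e * a e i = 0 := fun i => by
    simpa [Finset.sum_apply] using congrFun hc i.castSucc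
  have hconst : ∑ e ∈ S, c e * b e = 0 := by
    simpa [Finset.sum_apply] using congrFun hc (Fin.last m)
  simp_rw [mul_add, sum_add_distrib, hconst, mul_sum, ← mul_assoc]
  rw [sum_comm]
  simp_rw [← sum_mul, hlin, zero_mul, sum_const_zero, add_zero]

lemma card_filter_pos_add_card_filter_neg_le {ι : Type*} (S : Finset ι) (c : ι → ℝ) :
    #(S.filter fun e => 0 < c e) + #(S.filter fun e => c e < 0) ≤ #S := by
  rw [← card_filter_add_card_filter_not (s := S) (fun e => 0 < c e)]
  refine Nat.add_le_add_left (card_le_card fun e he => ?_) _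
  rw [mem_filter] at he ⊢
  exact ⟨he.1, he.2.not_gt⟩

lemma lt_card_filter_pos_of_relation {ι : Type*} {r m : ℕ}
    {a : ι → Fin m → ℝ} {b : ι → ℝ}
    (hreal : ∀ X : Finset ι, #X ≤ r → ∃ x : Fin m → ℝ,
      (∀ e ∈ X, 0 < (∑ i, a e i * x i) + b e) ∧ ∀ e ∉ X, (∑ i, a e i * x i) + b e < 0)
    {S : Finset ι} {c : ι → ℝ}
    (hc : ∑ e ∈ S, c e • (Fin.snoc (a e) (b e) : Fin (m + 1) → ℝ) = 0)
    (hne : ∃ e ∈ S, c e ≠ 0) :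
    r < #(S.filter fun e => 0 < c e) := by
  by_contra! hcard
  obtain ⟨x, hpos, hneg⟩ := hreal _ hcard
  refine (sum_mul_pos_of_sign_agree (fun e he hce => ?_) hne).ne' (sum_mul_affine_eq_zero hc x)
  rcases hce.lt_or_gt with hlt | hgt
  · exact mul_pos_of_neg_of_neg hlt (hneg e fun hP => (mem_filter.mp hP).2.not_gt hlt)
  · exact mul_pos hgt (hpos e (mem_filter.mpr ⟨he, hgt⟩))

theorem full_simplicial_complex_edim_lower_bound_general
    {α : Type*} [Fintype α] (r m : ℕ)
    (h : IsRealizable {X : Finset α | X.card ≤ r} m) :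
    min (2 * r) (Fintype.card α - 1) ≤ m := by
  by_contra! hm
  obtain ⟨a, b, K, -, -, hiff⟩ := h
  have hreal : ∀ X : Finset α, #X ≤ r → ∃ x : Fin m → ℝ,
      (∀ e ∈ X, 0 < (∑ i, a e i * x i) + b e) ∧
      ∀ e ∉ X, (∑ i, a e i * x i) + b e < 0 :=
    fun X hX => by obtain ⟨x, -, hx⟩ := (hiff X).mp hX; exact ⟨x, hx⟩
  obtain ⟨S, -, hS⟩ := exists_subset_card_eq (s := (univ : Finset α)) (n := m + 2)
    (by rw [card_univ]; omega)
  obtain ⟨c, hc, hne⟩ :=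
    exists_nontrivial_relation_of_finrank_lt_card (K := ℝ) (S := S)
      (fun e => (Fin.snoc (a e) (b e) : Fin (m + 1) → ℝ))
      (by rw [Module.finrank_fin_fun, hS]; omega)
  have hP := lt_card_filter_pos_of_relation hreal hc hne
  have hN := lt_card_filter_pos_of_relation hreal (c := -c) (by simpa using hc)
    (by simpa using hne)
  simp only [Pi.neg_apply, neg_pos] at hN
  have hPN := card_filter_pos_add_card_filter_neg_le S c
  omega

/-- If the full simplicial complex `U_{r,n}` of all subsets of size at most `r` of an
`n`-element set is realizable in `ℝ^m`, then `m ≥ min(2r, n − 1)`. -/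
theorem full_simplicial_complex_edim_lower_bound
    {α : Type*} [Fintype α] [DecidableEq α] (r m : ℕ)
    (hr1 : 1 ≤ r) (hrn : r ≤ Fintype.card α)
    (h : IsRealizable {X : Finset α | X.card ≤ r} m) :
    min (2 * r) (Fintype.card α - 1) ≤ m :=
  full_simplicial_complex_edim_lower_bound_general r m h
end
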